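/- Let Δ_n = {(r,c) ∈ ℕ² : 1 ≤ r, c ≤ n, r + c ≤ n+1} and define β(r,c) = n + 2 - r - c. Let ν be a partition of n(n+1)/2. Then there exists a partition of Δ_n into blocks whose sizes are the column lengths of ν such that β is injective on each block, if and only if ν dominates the staircase partition ρ(n) = (n, n-1, ..., 1). -/

import Mathlib

/-- `f` is a partition of `d`. -/
def IsPartitionOf (d : ℕ) (f : ℕ → ℕ) : Prop :=
  (∀ i j, i ≤ j → f j ≤ f i) ∧
  ∃ N, (∀ i, N ≤ i → f i = 0) ∧ ∑ i ∈ Finset.range N, f i = d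

/-- The transpose partition: `conj f i` is the length of the `(i+1)`-st column of `f`. -/
noncomputable def conj (f : ℕ → ℕ) : ℕ → ℕ := fun i => {j : ℕ | i < f j}.ncard

/-- `f` dominates `g`. -/
def Dominates (f g : ℕ → ℕ) : Prop :=
  ∀ k, ∑ i ∈ Finset.range k, g i ≤ ∑ i ∈ Finset.range k, f i

/-- The staircase partition `ρ(n) = (n, n-1, ..., 1)`. -/
def staircase (n : ℕ) : ℕ → ℕ := fun i => n - i

/-- The triangular grid `Δ_n = {(r,c) : 1 ≤ r, c, r+c ≤ n+1}`. -/
def Delta (n : ℕ) : Set (ℕ × ℕ) := {p | 1 ≤ p.1 ∧ 1 ≤ p.2 ∧ p.1 + p.2 ≤ n + 1}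

/-- `β(r,c) = n + 2 - r - c`. -/
def beta (n : ℕ) (p : ℕ × ℕ) : ℕ := n + 2 - p.1 - p.2

/-!
Write `c = conj ν` for the block sizes. A block of size `c j` on which `β` is injective contains
at most `min (c j) k` of the cells with `β ≤ k`, and there are `ρ₁ + ⋯ + ρ_k` such cells, while
`∑ j, min (c j) k = ν₁ + ⋯ + ν_k`; this gives dominance.

Conversely, induct on `n`. The grid `Δ_{n+1}` is `Δ_n`, on which `β` is shifted by one, together
with the `n + 1` cells on which `β = 1`. Removing from `ν` the horizontal strip of `n + 1` cells
given by `μ_i = (ν_i - (n+1)) + min (n+1) ν_{i+1}` yields a partition `μ` of `n(n+1)/2` that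
dominates `ρ(n)`. Since `ν_{i+1} ≤ μ_i ≤ ν_i`, every column of `ν` is at most one cell longer than
the corresponding column of `μ`, and exactly `n + 1` columns are longer. Blocks for `μ` therefore
extend to blocks for `ν` by giving each of these `n + 1` columns one of the new cells.
-/

open Finset Function

section Conj

variable {f g : ℕ → ℕ} {N : ℕ}

theorem lt_conj_iff (hf : Antitone f) (hN : f N = 0) {i j : ℕ} : i < conj f j ↔ j < f i := by
  classical
  have hex : ∃ m, f m ≤ j := ⟨N, hN ▸ Nat.zero_le j⟩
  have hset : {i | j < f i} = Set.Iio (Nat.find hex) := by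
    ext i
    simp only [Set.mem_ofPred_eq, Set.mem_Iio, Nat.lt_find_iff, not_le]
    exact ⟨fun h m hm => h.trans_le (hf hm), fun h => h i le_rfl⟩
  change i < {i | j < f i}.ncard ↔ _
  rw [hset, Set.ncard_Iio_nat, ← Set.mem_Iio, ← hset, Set.mem_ofPred_eq]

theorem conj_le_iff (hf : Antitone f) (hN : f N = 0) {i j : ℕ} : conj f j ≤ i ↔ f i ≤ j := by
  simpa only [not_lt] using (lt_conj_iff hf hN (i := i) (j := j)).not

theorem conj_le_conj (hg : Antitone g) (hgN : g N = 0) (hf : Antitone f) (hfN : f N = 0)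
    (hgf : g ≤ f) (j : ℕ) : conj g j ≤ conj f j :=
  (conj_le_iff hg hgN).2 <| (hgf _).trans <| (conj_le_iff hf hfN).1 le_rfl

theorem conj_le_conj_add_one (hg : Antitone g) (hgN : g N = 0) (hf : Antitone f) (hfN : f N = 0)
    (hfg : ∀ i, f (i + 1) ≤ g i) (j : ℕ) : conj f j ≤ conj g j + 1 :=
  (conj_le_iff hf hfN).2 <| (hfg _).trans <| (conj_le_iff hg hgN).1 le_rfl

theorem sum_range_min_conj (hf : Antitone f) (hN : f N = 0) {M : ℕ} (hM : f 0 ≤ M) (k : ℕ) :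
    ∑ j ∈ range M, min (conj f j) k = ∑ i ∈ range k, f i := by
  let r : ℕ → ℕ → Prop := fun j i => j < f i
  have hrow : ∀ j, min (conj f j) k = #((range k).bipartiteAbove r j) := by
    intro j
    have : (range k).bipartiteAbove r j = range (min (conj f j) k) := by
      ext i
      simp [r, bipartiteAbove, lt_conj_iff hf hN, and_comm]
    rw [this, card_range]
  have hcol : ∀ i, #((range M).bipartiteBelow r i) = f i := by
    intro i
    have : (range M).bipartiteBelow r i = range (f i) := by
      ext j
      simpa [r, bipartiteBelow] using fun hj => hj.trans_le ((hf (Nat.zero_le i)).trans hM)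
    rw [this, card_range]
  simp only [hrow, sum_card_bipartiteAbove_eq_sum_card_bipartiteBelow, hcol]

theorem sum_range_conj (hf : Antitone f) (hN : f N = 0) {M : ℕ} (hM : f 0 ≤ M) :
    ∑ j ∈ range M, conj f j = ∑ i ∈ range N, f i := by
  rw [← sum_range_min_conj hf hN hM N]
  refine sum_congr rfl fun j _ => (min_eq_left ?_).symm
  exact (conj_le_iff hf hN).2 (hN ▸ Nat.zero_le j)

end Conj

theorem ncard_le_sum_min_of_injOn {ι α γ : Type*} {s : Finset ι} {B : ι → Set α} {D : Set α}
    {t : Set γ} {f : α → γ} (hB : ∀ i ∈ s, (B i).Finite) (ht : t.Finite)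
    (hD : D ⊆ ⋃ i ∈ s, B i) (hDt : Set.MapsTo f D t) (hf : ∀ i ∈ s, Set.InjOn f (B i)) :
    D.ncard ≤ ∑ i ∈ s, min (B i).ncard t.ncard := by
  have hcover : D ⊆ ⋃ i ∈ s, (B i ∩ D) := fun x hx => by
    obtain ⟨i, hi, hxi⟩ := Set.mem_iUnion₂.1 (hD hx)
    exact Set.mem_iUnion₂.2 ⟨i, hi, hxi, hx⟩
  calc D.ncard ≤ (⋃ i ∈ s, (B i ∩ D)).ncard :=
        Set.ncard_le_ncard hcover (s.finite_toSet.biUnion fun i hi => (hB i hi).inter_of_left D)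
    _ ≤ ∑ i ∈ s, (B i ∩ D).ncard := s.set_ncard_biUnion_le _
    _ ≤ ∑ i ∈ s, min (B i).ncard t.ncard := sum_le_sum fun i hi =>
        le_min (Set.ncard_le_ncard Set.inter_subset_left (hB i hi))
          (Set.ncard_le_ncard_of_injOn f (fun x hx => hDt hx.2)
            ((hf i hi).mono Set.inter_subset_left) ht)

theorem card_filter_lt_add_sum {ι : Type*} {s : Finset ι} {a b : ι → ℕ}
    (hab : ∀ i ∈ s, a i ≤ b i ∧ b i ≤ a i + 1) :
    #{i ∈ s | a i < b i} + ∑ i ∈ s, a i = ∑ i ∈ s, b i := by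
  rw [card_filter, ← sum_add_distrib]
  refine sum_congr rfl fun i hi => ?_
  have := hab i hi
  split_ifs <;> omega

structure IsBlockDecomposition {ι α γ : Type*} (X : Set α) (f : α → γ) (c : ι → ℕ)
    (B : ι → Set α) : Prop where
  pairwise_disjoint : Pairwise (Disjoint on B)
  iUnion_eq : ⋃ j, B j = X
  ncard_eq : ∀ j, (B j).ncard = c j
  injOn : ∀ j, Set.InjOn f (B j)

namespace IsBlockDecomposition

variable {ι α γ : Type*} {X Y : Set α} {f : α → γ} {c d : ι → ℕ} {B E : ι → Set α}

theorem subset (hB : IsBlockDecomposition X f c B) (j : ι) : B j ⊆ X :=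
  hB.iUnion_eq ▸ Set.subset_iUnion B j

theorem of_eqOn_comp {δ : Type*} {f' : α → δ} {g : γ → δ} (hB : IsBlockDecomposition X f c B)
    (hg : Injective g) (h : Set.EqOn f' (g ∘ f) X) : IsBlockDecomposition X f' c B where
  pairwise_disjoint := hB.pairwise_disjoint
  iUnion_eq := hB.iUnion_eq
  ncard_eq := hB.ncard_eq
  injOn j := (hg.comp_injOn (hB.injOn j)).congr (h.mono (hB.subset j)).symm

theorem union (hB : IsBlockDecomposition X f c B) (hE : IsBlockDecomposition Y f d E)
    (hX : X.Finite) (hY : Y.Finite) (hXY : Disjoint X Y) (hf : ∀ x ∈ X, ∀ y ∈ Y, f x ≠ f y) :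
    IsBlockDecomposition (X ∪ Y) f (fun j => c j + d j) (fun j => B j ∪ E j) where
  pairwise_disjoint i j hij := by
    have hBE : ∀ i j, Disjoint (B i) (E j) := fun i j => hXY.mono (hB.subset i) (hE.subset j)
    exact Disjoint.union_left ((hB.pairwise_disjoint hij).union_right (hBE i j))
      ((hBE j i).symm.union_right (hE.pairwise_disjoint hij))
  iUnion_eq := by rw [Set.iUnion_union_distrib, hB.iUnion_eq, hE.iUnion_eq]
  ncard_eq j := by
    rw [Set.ncard_union_eq (hXY.mono (hB.subset j) (hE.subset j)) (hX.subset (hB.subset j))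
      (hY.subset (hE.subset j)), hB.ncard_eq, hE.ncard_eq]
  injOn j := (Set.injOn_union (hXY.mono (hB.subset j) (hE.subset j))).2
    ⟨hB.injOn j, hE.injOn j, fun x hx y hy => hf x (hB.subset j hx) y (hE.subset j hy)⟩

end IsBlockDecomposition

theorem isBlockDecomposition_image_preimage {ι α γ κ : Type*} {p : κ → α} (hp : Injective p)
    {s : κ → ι} (hs : Injective s) (f : α → γ) :
    IsBlockDecomposition (Set.range p) f ((Set.range s).indicator 1)
      (fun j => p '' (s ⁻¹' {j})) where
  pairwise_disjoint i j hij :=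
    (Set.disjoint_image_iff hp).2 ((Set.disjoint_singleton.2 hij).preimage s)
  iUnion_eq := by rw [← Set.image_iUnion, ← Set.preimage_iUnion, Set.iUnion_of_singleton,
    Set.preimage_univ, Set.image_univ]
  ncard_eq j := by
    classical
    rw [Set.ncard_image_of_injective _ hp, Set.indicator_apply]
    split_ifs with h
    · rw [Set.ncard_preimage_of_injective_subset_range hs (Set.singleton_subset_iff.2 h),
        Set.ncard_singleton, Pi.one_apply]
    · rw [Set.preimage_singleton_eq_empty.2 h, Set.ncard_empty]
  injOn j := ((Set.subsingleton_singleton.preimage hs).image p).injOn f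

theorem Delta_zero : Delta 0 = ∅ :=
  Set.eq_empty_of_forall_notMem fun p hp => by obtain ⟨h1, h2, h3⟩ := hp; omega

theorem Delta_finite (n : ℕ) : (Delta n).Finite :=
  (Set.finite_Iic (n, n)).subset fun p ⟨h1, h2, h3⟩ => ⟨by omega, by omega⟩

theorem one_le_beta {n : ℕ} {p : ℕ × ℕ} (hp : p ∈ Delta n) : 1 ≤ beta n p := by
  obtain ⟨h1, h2, h3⟩ := hp
  simp only [beta]
  omega

def diagCell (n : ℕ) (t : Fin (n + 1)) : ℕ × ℕ := (t + 1, n + 1 - t)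

theorem diagCell_injective (n : ℕ) : Injective (diagCell n) := fun t t' h => by
  simp only [diagCell, Prod.mk.injEq] at h
  exact Fin.ext (by omega)

theorem Delta_succ (n : ℕ) : Delta (n + 1) = Delta n ∪ Set.range (diagCell n) := by
  ext ⟨r, c⟩
  simp only [Delta, diagCell, Set.mem_union, Set.mem_ofPred_eq, Set.mem_range, Prod.mk.injEq]
  constructor
  · rintro ⟨h1, h2, h3⟩
    rcases Nat.lt_or_ge (r + c) (n + 2) with h | h
    · exact Or.inl ⟨h1, h2, by omega⟩
    · exact Or.inr ⟨⟨r - 1, by omega⟩, by simp only; omega, by simp only; omega⟩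
  · rintro (⟨h1, h2, h3⟩ | ⟨t, rfl, rfl⟩)
    · exact ⟨h1, h2, by omega⟩
    · have := t.isLt
      omega

theorem disjoint_Delta_range_diagCell (n : ℕ) : Disjoint (Delta n) (Set.range (diagCell n)) := by
  rw [Set.disjoint_right]
  rintro _ ⟨t, rfl⟩ ⟨-, -, h⟩
  have := t.isLt
  simp only [diagCell] at h
  omega

theorem beta_succ_eqOn (n : ℕ) : Set.EqOn (beta (n + 1)) (Nat.succ ∘ beta n) (Delta n) := by
  rintro p ⟨-, -, h⟩
  simp only [beta, comp_apply]
  omega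

theorem beta_succ_diagCell (n : ℕ) (t : Fin (n + 1)) : beta (n + 1) (diagCell n t) = 1 := by
  have := t.isLt
  simp only [beta, diagCell]
  omega

theorem IsBlockDecomposition.union_diagCell {n : ℕ} {c : ℕ → ℕ} {B : ℕ → Set (ℕ × ℕ)}
    (hB : IsBlockDecomposition (Delta n) (beta n) c B) {s : Fin (n + 1) → ℕ} (hs : Injective s) :
    IsBlockDecomposition (Delta (n + 1)) (beta (n + 1))
      (fun j => c j + (Set.range s).indicator 1 j) (fun j => B j ∪ diagCell n '' (s ⁻¹' {j})) := by
  rw [Delta_succ]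
  refine (hB.of_eqOn_comp Nat.succ_injective (beta_succ_eqOn n)).union
    (isBlockDecomposition_image_preimage (diagCell_injective n) hs _) (Delta_finite n)
    (Set.finite_range _) (disjoint_Delta_range_diagCell n) ?_
  rintro p hp _ ⟨t, rfl⟩
  rw [beta_succ_eqOn n hp, beta_succ_diagCell, comp_apply, Ne, Nat.succ_inj]
  exact Nat.one_le_iff_ne_zero.1 (one_le_beta hp)

theorem sum_range_staircase_le_ncard (n k : ℕ) :
    ∑ i ∈ range k, staircase n i ≤ {p ∈ Delta n | beta n p ≤ k}.ncard := by
  let cell : (_ : ℕ) × ℕ → ℕ × ℕ := fun x => (x.2 + 1, n - x.1 - x.2)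
  have hcell : ∀ x ∈ (range k).sigma (fun i => range (n - i)), beta n (cell x) = x.1 + 1 := by
    rintro ⟨i, t⟩ hx
    simp only [mem_sigma, mem_range] at hx
    simp only [beta, cell]
    omega
  calc ∑ i ∈ range k, staircase n i = #((range k).sigma fun i => range (n - i)) := by
        simp [staircase]
    _ ≤ {p ∈ Delta n | beta n p ≤ k}.ncard := by
      rw [← Set.ncard_coe_finset]
      refine Set.ncard_le_ncard_of_injOn cell ?_ ?_ ((Delta_finite n).subset fun p hp => hp.1)
      · rintro ⟨i, t⟩ hx
        have hβ := hcell _ hx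
        simp only [coe_sigma, Set.mem_sigma_iff, coe_range, Set.mem_Iio] at hx
        refine ⟨⟨?_, ?_, ?_⟩, ?_⟩ <;> simp only [cell] at hβ ⊢ <;> omega
      · rintro ⟨i, t⟩ hx ⟨i', t'⟩ hx' h
        simp only [coe_sigma, Set.mem_sigma_iff, coe_range, Set.mem_Iio] at hx hx'
        simp only [Prod.mk.injEq, cell] at h
        obtain rfl : i = i' := by omega
        obtain rfl : t = t' := by omega
        rfl

theorem IsBlockDecomposition.dominates {n N : ℕ} {ν : ℕ → ℕ} (hν : Antitone ν) (hN : ν N = 0)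
    {B : ℕ → Set (ℕ × ℕ)} (hB : IsBlockDecomposition (Delta n) (beta n) (conj ν) B) :
    Dominates ν (staircase n) := by
  intro k
  have hfin : ∀ j, (B j).Finite := fun j => (Delta_finite n).subset (hB.subset j)
  have hcover : {p ∈ Delta n | beta n p ≤ k} ⊆ ⋃ j ∈ range (ν 0), B j := by
    rintro p ⟨hp, -⟩
    obtain ⟨j, hj⟩ := Set.mem_iUnion.1 (hB.iUnion_eq ▸ hp)
    have hj0 : 0 < conj ν j := hB.ncard_eq j ▸ (Set.ncard_pos (hfin j)).2 ⟨p, hj⟩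
    exact Set.mem_biUnion (mem_range.2 ((lt_conj_iff hν hN).1 hj0)) hj
  calc ∑ i ∈ range k, staircase n i ≤ {p ∈ Delta n | beta n p ≤ k}.ncard :=
        sum_range_staircase_le_ncard n k
    _ ≤ ∑ j ∈ range (ν 0), min (B j).ncard (Set.Icc 1 k).ncard :=
        ncard_le_sum_min_of_injOn (fun j _ => hfin j) (Set.finite_Icc 1 k) hcover
          (fun p hp => ⟨one_le_beta hp.1, hp.2⟩) (fun j _ => hB.injOn j)
    _ = ∑ i ∈ range k, ν i := by
      simp only [hB.ncard_eq, Set.ncard_Icc_nat, Nat.add_sub_cancel]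
      exact sum_range_min_conj hν hN le_rfl k

theorem triangle_add_one (n : ℕ) : (n + 1) * (n + 1 + 1) / 2 = n * (n + 1) / 2 + (n + 1) := by
  rw [show (n + 1) * (n + 1 + 1) = n * (n + 1) + (n + 1) * 2 by ring,
    Nat.add_mul_div_right _ _ two_pos]

theorem sum_range_succ_staircase_succ (n k : ℕ) :
    ∑ i ∈ range (k + 1), staircase (n + 1) i = ∑ i ∈ range k, staircase n i + (n + 1) := by
  simp [sum_range_succ', staircase]

theorem sum_range_staircase (n : ℕ) : ∑ i ∈ range n, staircase n i = n * (n + 1) / 2 := by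
  induction n with
  | zero => rfl
  | succ n ih => rw [sum_range_succ_staircase_succ, ih, triangle_add_one]

theorem Dominates.le_apply_zero {n : ℕ} {ν : ℕ → ℕ} (hdom : Dominates ν (staircase n)) :
    n ≤ ν 0 := by
  simpa [staircase] using hdom 1

theorem Dominates.triangle_le_sum_range {n : ℕ} {ν : ℕ → ℕ} (hdom : Dominates ν (staircase n)) :
    n * (n + 1) / 2 ≤ ∑ i ∈ range n, ν i :=
  sum_range_staircase n ▸ hdom n

namespace IsPartitionOf

variable {d : ℕ} {f : ℕ → ℕ}

theorem antitone (h : IsPartitionOf d f) : Antitone f := fun i j hij => h.1 i j hij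

theorem sum_range_le (h : IsPartitionOf d f) (m : ℕ) : ∑ i ∈ range m, f i ≤ d := by
  obtain ⟨-, N, hN, rfl⟩ := h
  calc ∑ i ∈ range m, f i ≤ ∑ i ∈ range (max m N), f i :=
        sum_le_sum_of_subset (range_subset_range.2 (le_max_left m N))
    _ = ∑ i ∈ range N, f i := (sum_subset (range_subset_range.2 (le_max_right m N))
        fun i _ hi => hN i (by simpa using hi)).symm

theorem apply_eq_zero_of_le_sum (h : IsPartitionOf d f) {m : ℕ} (hm : d ≤ ∑ i ∈ range m, f i) :
    f m = 0 := by
  have := h.sum_range_le (m + 1)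
  rw [sum_range_succ] at this
  omega

theorem sum_range_eq_of_le (h : IsPartitionOf d f) {m : ℕ} (hm : d ≤ ∑ i ∈ range m, f i) :
    ∑ i ∈ range m, f i = d :=
  le_antisymm (h.sum_range_le m) hm

end IsPartitionOf

def removeStrip (m : ℕ) (f : ℕ → ℕ) (i : ℕ) : ℕ := f i - m + min m (f (i + 1))

section RemoveStrip

variable {m N : ℕ} {f : ℕ → ℕ}

theorem removeStrip_le (hf : Antitone f) (i : ℕ) : removeStrip m f i ≤ f i := by
  have := hf (Nat.le_add_right i 1)
  simp only [removeStrip]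
  omega

theorem le_removeStrip (hf : Antitone f) (i : ℕ) : f (i + 1) ≤ removeStrip m f i := by
  have := hf (Nat.le_add_right i 1)
  simp only [removeStrip]
  omega

theorem antitone_removeStrip (hf : Antitone f) : Antitone (removeStrip m f) := by
  intro i j hij
  rcases hij.eq_or_lt with rfl | hij
  · rfl
  · exact (removeStrip_le hf j).trans ((hf hij).trans (le_removeStrip hf i))

theorem removeStrip_eq_zero (hf : Antitone f) (hN : f N = 0) : removeStrip m f N = 0 := by
  have := hf (Nat.le_add_right N 1)
  simp only [removeStrip]
  omega

theorem sum_range_removeStrip_add (hm : m ≤ f 0) (k : ℕ) :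
    ∑ i ∈ range k, removeStrip m f i + m = ∑ i ∈ range k, f i + min m (f k) := by
  induction k with
  | zero => simp [hm]
  | succ k ih =>
    have hk : removeStrip m f k = f k - m + min m (f (k + 1)) := rfl
    rw [sum_range_succ, sum_range_succ, hk]
    omega

theorem conj_removeStrip_le (hf : Antitone f) (hN : f N = 0) (j : ℕ) :
    conj (removeStrip m f) j ≤ conj f j :=
  conj_le_conj (antitone_removeStrip hf) (removeStrip_eq_zero hf hN) hf hN (removeStrip_le hf) j

theorem conj_le_conj_removeStrip_add_one (hf : Antitone f) (hN : f N = 0) (j : ℕ) :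
    conj f j ≤ conj (removeStrip m f) j + 1 :=
  conj_le_conj_add_one (antitone_removeStrip hf) (removeStrip_eq_zero hf hN) hf hN
    (le_removeStrip hf) j

theorem dominates_removeStrip {n : ℕ} (hdom : Dominates f (staircase (n + 1))) :
    Dominates (removeStrip (n + 1) f) (staircase n) := by
  intro k
  have h := sum_range_removeStrip_add hdom.le_apply_zero k
  rcases le_total (n + 1) (f k) with hk | hk
  · have hle : ∑ i ∈ range k, staircase n i ≤ ∑ i ∈ range k, staircase (n + 1) i :=
      sum_le_sum fun i _ => by simp only [staircase]; omega
    have := hdom k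
    omega
  · rw [min_eq_right hk, ← sum_range_succ] at h
    have := hdom (k + 1)
    rw [sum_range_succ_staircase_succ] at this
    omega

end RemoveStrip

section StaircaseStep

variable {n : ℕ} {ν : ℕ → ℕ}

theorem sum_range_removeStrip_of_dominates (hν : IsPartitionOf ((n + 1) * (n + 1 + 1) / 2) ν)
    (hdom : Dominates ν (staircase (n + 1))) :
    ∑ i ∈ range (n + 1), removeStrip (n + 1) ν i = n * (n + 1) / 2 := by
  have h := sum_range_removeStrip_add hdom.le_apply_zero (n + 1)
  rw [hν.sum_range_eq_of_le hdom.triangle_le_sum_range,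
    hν.apply_eq_zero_of_le_sum hdom.triangle_le_sum_range, triangle_add_one] at h
  omega

theorem isPartitionOf_removeStrip (hν : IsPartitionOf ((n + 1) * (n + 1 + 1) / 2) ν)
    (hdom : Dominates ν (staircase (n + 1))) :
    IsPartitionOf (n * (n + 1) / 2) (removeStrip (n + 1) ν) := by
  have h0 := hν.apply_eq_zero_of_le_sum hdom.triangle_le_sum_range
  have hμ := antitone_removeStrip (m := n + 1) hν.antitone
  refine ⟨fun i j hij => hμ hij, n + 1, fun i hi => ?_, sum_range_removeStrip_of_dominates hν hdom⟩
  exact Nat.eq_zero_of_le_zero (removeStrip_eq_zero hν.antitone h0 ▸ hμ hi)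

theorem card_filter_conj_removeStrip_lt (hν : IsPartitionOf ((n + 1) * (n + 1 + 1) / 2) ν)
    (hdom : Dominates ν (staircase (n + 1))) :
    #{j ∈ range (ν 0) | conj (removeStrip (n + 1) ν) j < conj ν j} = n + 1 := by
  have h0 := hν.apply_eq_zero_of_le_sum hdom.triangle_le_sum_range
  have h := card_filter_lt_add_sum (s := range (ν 0)) fun j _ =>
    ⟨conj_removeStrip_le (m := n + 1) hν.antitone h0 j,
      conj_le_conj_removeStrip_add_one hν.antitone h0 j⟩
  rw [sum_range_conj hν.antitone h0 le_rfl, hν.sum_range_eq_of_le hdom.triangle_le_sum_range,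
    sum_range_conj (antitone_removeStrip hν.antitone) (removeStrip_eq_zero hν.antitone h0)
      (removeStrip_le hν.antitone 0), sum_range_removeStrip_of_dominates hν hdom,
    triangle_add_one] at h
  omega

end StaircaseStep

theorem exists_isBlockDecomposition_of_dominates (n : ℕ) {ν : ℕ → ℕ}
    (hν : IsPartitionOf (n * (n + 1) / 2) ν) (hdom : Dominates ν (staircase n)) :
    ∃ B, IsBlockDecomposition (Delta n) (beta n) (conj ν) B := by
  induction n generalizing ν with
  | zero =>
    have hν0 : ν 0 = 0 := hν.apply_eq_zero_of_le_sum le_rfl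
    refine ⟨fun _ => ∅, fun _ _ _ => disjoint_bot_left, by simp [Delta_zero], fun j => ?_,
      fun _ => Set.injOn_empty _⟩
    rw [Set.ncard_empty, eq_comm, ← Nat.le_zero, conj_le_iff hν.antitone hν0, hν0]
    exact Nat.zero_le j
  | succ n ih =>
    set μ := removeStrip (n + 1) ν
    obtain ⟨B, hB⟩ := ih (isPartitionOf_removeStrip hν hdom) (dominates_removeStrip hdom)
    set S := {j ∈ range (ν 0) | conj μ j < conj ν j}
    have hS : #S = n + 1 := card_filter_conj_removeStrip_lt hν hdom
    have h0 := hν.apply_eq_zero_of_le_sum hdom.triangle_le_sum_range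
    have hc : conj ν = fun j => conj μ j + (Set.range (S.orderEmbOfFin hS)).indicator 1 j := by
      funext j
      have hlo : conj μ j ≤ conj ν j := conj_removeStrip_le hν.antitone h0 j
      have hhi : conj ν j ≤ conj μ j + 1 := conj_le_conj_removeStrip_add_one hν.antitone h0 j
      have hout : ν 0 ≤ j → conj ν j = 0 := fun h =>
        Nat.le_zero.1 ((conj_le_iff hν.antitone h0).2 h)
      simp only [range_orderEmbOfFin, Set.indicator_apply, mem_coe, S, mem_filter, mem_range,
        Pi.one_apply]
      split_ifs <;> omega
    exact hc ▸ ⟨_, hB.union_diagCell (S.orderEmbOfFin hS).injective⟩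

/-- There is a partition of `Δ_n` into blocks whose sizes are the column lengths
of `ν`, with `β` injective on each block, iff `ν` dominates the staircase `ρ(n)`. -/
theorem blocks_exist_iff_dominates_staircase (n : ℕ) (ν : ℕ → ℕ)
    (hν : IsPartitionOf (n * (n + 1) / 2) ν) :
    (∃ B : ℕ → Set (ℕ × ℕ),
      (∀ j, B j ⊆ Delta n) ∧
      (∀ j j', j ≠ j' → Disjoint (B j) (B j')) ∧
      (⋃ j, B j) = Delta n ∧
      (∀ j, (B j).ncard = conj ν j) ∧
      (∀ j, Set.InjOn (beta n) (B j))) ↔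
    Dominates ν (staircase n) := by
  constructor
  · rintro ⟨B, -, hdisj, hunion, hcard, hinj⟩
    obtain ⟨N, hN, -⟩ := hν.2
    exact IsBlockDecomposition.dominates hν.antitone (hN N le_rfl) ⟨hdisj, hunion, hcard, hinj⟩
  · intro hdom
    obtain ⟨B, hB⟩ := exists_isBlockDecomposition_of_dominates n hν hdom
    exact ⟨B, hB.subset, hB.pairwise_disjoint, hB.iUnion_eq, hB.ncard_eq, hB.injOn⟩
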